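/- arXiv:2305.07278 — 2 statements merged into one kernel-verified Lean document; each statement's English description precedes it below -/
import Mathlib

section
/- Let S ∈ ℂ^{M̃×Ñ} (with M̃ ≤ Ñ) be a matrix such that every M̃ columns of S are linearly independent. Let X₀ ∈ ℂ^{Ñ×L̃} have row-sparsity r, set Y = S·X₀, and assume rank(Y) = L̃ with L̃ ≤ M̃. If r ≤ ⌈(M̃+L̃)/2⌉ − 1, then X₀ is the unique sparsest solution of Y = S·X: every matrix X ∈ ℂ^{Ñ×L̃} with S·X = Y and X ≠ X₀ has row-sparsity strictly greater than r. -/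
/-!
Suppose `X ≠ X₀` solves `S X = Y` and has at most `r` nonzero rows. Then `D = X - X₀ ≠ 0` has its
columns in `ker S`, supported on `Ω = supp X ∪ supp X₀`. As any `M` columns of `S` are independent,
`ker S` meets the vectors supported on `Ω` in dimension at most `|Ω| - min M |Ω|`; since `D ≠ 0`
this forces `|Ω| > M` and `rank D ≤ |Ω| - M`. On the other hand `rank X = L` because
`rank (S X) = L`, so `X` maps `ker D` injectively into the vectors `X c = X₀ c` supported on
`supp X ∩ supp X₀`. Rank–nullity for `D` then gives
`L ≤ |Ω| - M + |supp X ∩ supp X₀| = |supp X| + |supp X₀| - M ≤ 2r - M`,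
contradicting `r ≤ ⌈(M + L)/2⌉ - 1 < (M + L)/2`.
-/

open Module Submodule

theorem Submodule.finrank_map_add_finrank_inf_ker {K V W : Type*} [Field K] [AddCommGroup V]
    [Module K V] [AddCommGroup W] [Module K W] (f : V →ₗ[K] W) (P : Submodule K V)
    [FiniteDimensional K P] :
    finrank K (P.map f) + finrank K ↥(P ⊓ LinearMap.ker f) = finrank K P := by
  have h := (f.domRestrict P).finrank_range_add_finrank_ker
  have hker : (LinearMap.ker f).comap P.subtype = (P ⊓ LinearMap.ker f).comap P.subtype := by
    rw [comap_inf, comap_subtype_self, top_inf_eq]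
  rwa [LinearMap.range_domRestrict, LinearMap.ker_domRestrict, hker,
    (comapSubtypeEquivOfLe inf_le_left).finrank_eq] at h

namespace Pi

variable {K ι : Type*} [Field K] [Finite ι]

theorem spanSubset_mono {s t : Set ι} (h : s ⊆ t) : spanSubset K s ≤ spanSubset K t :=
  span_mono (Set.image_mono h)

theorem spanSubset_inter (s t : Set ι) :
    spanSubset K (s ∩ t) = spanSubset K s ⊓ spanSubset K t := by
  ext v
  simp only [mem_inf, mem_spanSubset_iff, Set.mem_inter_iff]
  grind

end Pi

namespace Matrix

variable {K l m n : Type*} [Field K] [Fintype n]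

theorem mulVec_mem_spanSubset_support [Finite m] (A : Matrix m n K) (v : n → K) :
    A *ᵥ v ∈ Pi.spanSubset K (Function.support A) := by
  refine Pi.mem_spanSubset_iff.mpr fun i hi => ?_
  have hAi : A i = 0 := not_not.mp hi
  simp [mulVec, hAi]

theorem rank_pos_of_ne_zero [DecidableEq n] {A : Matrix m n K} (hA : A ≠ 0) : 0 < A.rank := by
  rw [Nat.pos_iff_ne_zero, rank, Ne, finrank_eq_zero, LinearMap.range_eq_bot, ← toLin'_apply',
    LinearEquiv.map_eq_zero_iff]
  exact hA

theorem mulVec_injective_of_rank_mul_eq [Fintype l] [DecidableEq l] {S : Matrix m n K}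
    {X : Matrix n l K} (h : (S * X).rank = Fintype.card l) : Function.Injective X.mulVec := by
  rw [mulVec_injective_iff, linearIndependent_iff_card_eq_finrank_span]
  have hX : X.rank = Fintype.card l :=
    le_antisymm X.rank_le_card_width (h ▸ rank_mul_le_right S X)
  rw [← hX, rank_eq_finrank_span_cols]
  rfl

theorem finrank_ker_sub_le_ncard_support_inter [Finite m] (A B : Matrix m n K)
    (hA : Function.Injective A.mulVec) :
    finrank K (LinearMap.ker (A - B).mulVecLin) ≤
      (Function.support A ∩ Function.support B).ncard := by
  set P := LinearMap.ker (A - B).mulVecLin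
  have hmap : P.map A.mulVecLin ≤
      Pi.spanSubset K (Function.support A ∩ Function.support B) := by
    rintro _ ⟨v, hv, rfl⟩
    have hAB : A *ᵥ v = B *ᵥ v := sub_eq_zero.mp (by simpa [P, sub_mulVec] using hv)
    rw [Pi.spanSubset_inter]
    refine ⟨mulVec_mem_spanSubset_support A v, ?_⟩
    rw [mulVecLin_apply, hAB]
    exact mulVec_mem_spanSubset_support B v
  calc finrank K P = finrank K (P.map A.mulVecLin) := (P.equivMapOfInjective _ hA).finrank_eq
    _ ≤ _ := finrank_mono hmap
    _ = _ := Pi.dim_spanSubset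

section ColumnIndependence

variable {S : Matrix m n K} {k : ℕ}

theorem exists_subset_card_eq_min_linearIndependent_col (hk : k ≤ Fintype.card n)
    (hS : ∀ T : Finset n, T.card = k → LinearIndependent K fun j : T => S.col j)
    (s : Finset n) :
    ∃ T ⊆ s, T.card = min k s.card ∧ LinearIndependent K fun j : T => S.col j := by
  rcases le_total k s.card with hks | hsk
  · obtain ⟨T, hTs, hT⟩ := Finset.exists_subset_card_eq hks
    exact ⟨T, hTs, by rw [hT, min_eq_left hks], hS T hT⟩
  · obtain ⟨U, hsU, hU⟩ := Finset.exists_superset_card_eq hsk hk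
    exact ⟨s, subset_rfl, (min_eq_right hsk).symm,
      LinearIndepOn.mono (hS U hU) (Finset.coe_subset.mpr hsU)⟩

theorem card_le_finrank_map_spanSubset [Finite m] [DecidableEq n] {T : Finset n} {s : Set n}
    (hTs : ↑T ⊆ s) (hT : LinearIndependent K fun j : T => S.col j) :
    T.card ≤ finrank K ((Pi.spanSubset K s).map S.mulVecLin) := by
  have hcols : span K (Set.range fun j : T => S.col j) ≤ (Pi.spanSubset K s).map S.mulVecLin := by
    rw [span_le]
    rintro _ ⟨j, rfl⟩
    refine ⟨Pi.single j 1, Pi.mem_spanSubset_iff.mpr fun i hi => ?_, mulVec_single_one S j⟩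
    exact Pi.single_eq_of_ne (by rintro rfl; exact hi (hTs j.2)) 1
  calc T.card = finrank K (span K (Set.range fun j : T => S.col j)) := by
        rw [finrank_span_eq_card hT, Fintype.card_coe]
    _ ≤ _ := finrank_mono hcols

theorem finrank_spanSubset_inf_ker_add_min_le [Finite m] [DecidableEq n]
    (hk : k ≤ Fintype.card n)
    (hS : ∀ T : Finset n, T.card = k → LinearIndependent K fun j : T => S.col j) (s : Set n) :
    finrank K ↥(Pi.spanSubset K s ⊓ LinearMap.ker S.mulVecLin) + min k s.ncard ≤ s.ncard := by
  obtain ⟨s, rfl⟩ := s.toFinite.exists_finset_coe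
  obtain ⟨T, hTs, hT, hTli⟩ := exists_subset_card_eq_min_linearIndependent_col hk hS s
  have hrank := card_le_finrank_map_spanSubset (Finset.coe_subset.mpr hTs) hTli
  have hnullity := finrank_map_add_finrank_inf_ker S.mulVecLin (Pi.spanSubset K (s : Set n))
  rw [Pi.dim_spanSubset] at hnullity
  rw [Set.ncard_coe_finset] at hnullity ⊢
  omega

end ColumnIndependence

end Matrix

open Matrix

theorem mmv_uniqueness_general (M N L : ℕ) (hMN : M ≤ N)
    (S : Matrix (Fin M) (Fin N) ℂ)
    (hS : ∀ T : Finset (Fin N), T.card = M →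
      LinearIndependent ℂ (fun j : T => S.transpose (j : Fin N)))
    (X₀ : Matrix (Fin N) (Fin L) ℂ) (r : ℕ)
    (hX₀ : {i | X₀ i ≠ 0}.ncard = r)
    (Y : Matrix (Fin M) (Fin L) ℂ) (hY : Y = S * X₀)
    (hrank : Y.rank = L)
    (hbound : (r : ℤ) ≤ ⌈((M : ℚ) + L) / 2⌉ - 1) :
    ∀ X : Matrix (Fin N) (Fin L) ℂ, S * X = Y → X ≠ X₀ →
      r < {i | X i ≠ 0}.ncard := by
  intro X hX hne
  change (Function.support X₀).ncard = r at hX₀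
  change r < (Function.support X).ncard
  by_contra! hXr
  have hrangeD : LinearMap.range (X - X₀).mulVecLin ≤
      Pi.spanSubset ℂ (Function.support X ∪ Function.support X₀) ⊓ LinearMap.ker S.mulVecLin := by
    rintro _ ⟨v, rfl⟩
    refine ⟨Pi.spanSubset_mono (Function.support_sub X X₀)
      (mulVec_mem_spanSubset_support (X - X₀) v), ?_⟩
    change S *ᵥ ((X - X₀) *ᵥ v) = 0
    rw [mulVec_mulVec, Matrix.mul_sub, hX, hY, sub_self, zero_mulVec]
  have hnullity := (X - X₀).mulVecLin.finrank_range_add_finrank_ker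
  rw [finrank_fin_fun] at hnullity
  have hker := finrank_ker_sub_le_ncard_support_inter X X₀
    (mulVec_injective_of_rank_mul_eq (S := S) (by rw [hX, hrank, Fintype.card_fin]))
  have hΩ := finrank_spanSubset_inf_ker_add_min_le (by simpa using hMN) hS
    (Function.support X ∪ Function.support X₀)
  have hunion := Set.ncard_union_add_ncard_inter (Function.support X) (Function.support X₀)
  have hD : 0 < (X - X₀).rank := rank_pos_of_ne_zero (sub_ne_zero.mpr hne)
  have hDΩ := finrank_mono hrangeD
  have hr : ((r : ℤ) : ℚ) < ((M : ℚ) + L) / 2 := Int.lt_ceil.mp (by omega)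
  have hrML : 2 * r < M + L := by
    exact_mod_cast (by push_cast at hr; linarith : (2 * r : ℚ) < M + L)
  rw [Matrix.rank] at hD
  omega

/-- **Uniqueness condition for the noiseless MMV problem.**
If every `M` columns of `S : ℂ^{M×N}` are linearly independent, `X₀` has
row-sparsity `r`, `Y = S * X₀` has rank `L ≤ M`, and
`r ≤ ⌈(M+L)/2⌉ - 1`, then any other solution `X` of `S * X = Y` has
row-sparsity strictly greater than `r`. -/
theorem mmv_uniqueness (M N L : ℕ) (hMN : M ≤ N)
    (S : Matrix (Fin M) (Fin N) ℂ)
    (hS : ∀ T : Finset (Fin N), T.card = M →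
      LinearIndependent ℂ (fun j : T => S.transpose (j : Fin N)))
    (X₀ : Matrix (Fin N) (Fin L) ℂ) (r : ℕ)
    (hX₀ : {i | X₀ i ≠ 0}.ncard = r)
    (Y : Matrix (Fin M) (Fin L) ℂ) (hY : Y = S * X₀)
    (hrank : Y.rank = L) (hLM : L ≤ M)
    (hbound : (r : ℤ) ≤ ⌈((M : ℚ) + L) / 2⌉ - 1) :
    ∀ X : Matrix (Fin N) (Fin L) ℂ, S * X = Y → X ≠ X₀ →
      r < {i | X i ≠ 0}.ncard :=
  mmv_uniqueness_general M N L hMN S hS X₀ r hX₀ Y hY hrank hbound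
end

section
/- Let S ∈ ℂ^{M̃×Ñ}, and suppose X₁, X₂ ∈ ℂ^{Ñ×L̃} satisfy S·X₁ = S·X₂ = Y with rank(Y) = L̃. Let R₁ and R₂ be the row-supports of X₁ and X₂, of cardinalities r₁ and r₂ respectively, let S^{r₁} ∈ ℂ^{M̃×r₁} and S^{r₂} ∈ ℂ^{M̃×r₂} be the submatrices of S consisting of the columns indexed by R₁ and R₂, and let X₁^{r₁} ∈ ℂ^{r₁×L̃} and X₂^{r₂} ∈ ℂ^{r₂×L̃} be the submatrices of X₁ and X₂ consisting of their nonzero rows. Then the columns of the stacked matrix [X₁^{r₁}; −X₂^{r₂}] ∈ ℂ^{(r₁+r₂)×L̃} lie in the null space of the concatenated matrix [S^{r₁}, S^{r₂}] ∈ ℂ^{M̃×(r₁+r₂)}, the stacked matrix has rank at least L̃, and consequently the null space of [S^{r₁}, S^{r₂}] has dimension at least L̃. -/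
/-!
Dropping the zero rows of `X` and the matching columns of `S` does not change `S X`,
so `[S^{r₁}, S^{r₂}] [X₁^{r₁}; -X₂^{r₂}] = S X₁ - S X₂ = 0` and the column space of
the stacked matrix lies in the null space. Its rank is at least
`rank (S^{r₁} X₁^{r₁}) = rank Y = L̃`, since `X₁^{r₁}` is a block of its rows.
-/

namespace Matrix

variable {m n o R : Type*}

theorem submatrix_mul_submatrix_of_injective {ι : Type*} [Fintype n] [Fintype ι]
    [NonUnitalNonAssocSemiring R] (S : Matrix m n R) (X : Matrix n o R) {f : ι → n}
    (hf : f.Injective) (hX : ∀ i, X i ≠ 0 → i ∈ Set.range f) :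
    S.submatrix id f * X.submatrix f id = S * X := by
  ext a l
  refine Fintype.sum_of_injective f hf _ _ (fun i hi => ?_) fun _ => rfl
  simp [not_not.mp (mt (hX i) hi)]

theorem submatrix_mul_submatrix_nonzeroRows [Fintype n] [NonUnitalNonAssocSemiring R]
    (S : Matrix m n R) (X : Matrix n o R) [Fintype {i // X i ≠ 0}] :
    -- without both ascriptions `*` elaborates to `CStarMatrix` multiplication
    S.submatrix id (Subtype.val : {i // X i ≠ 0} → n) *
      X.submatrix (Subtype.val : {i // X i ≠ 0} → n) id = S * X :=
  submatrix_mul_submatrix_of_injective S X Subtype.val_injective fun i hi => ⟨⟨i, hi⟩, rfl⟩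

theorem col_mem_ker_mulVecLin_of_mul_eq_zero [Fintype n] [CommSemiring R]
    {A : Matrix m n R} {B : Matrix n o R} (hAB : A * B = 0) (l : o) :
    (fun p => B p l) ∈ LinearMap.ker A.mulVecLin := by
  change (A * B).col l = 0
  rw [hAB]
  rfl

theorem rank_le_finrank_ker_mulVecLin_of_mul_eq_zero [Fintype n] [Fintype o] {K : Type*} [Field K]
    {A : Matrix m n K} {B : Matrix n o K} (hAB : A * B = 0) :
    B.rank ≤ Module.finrank K (LinearMap.ker A.mulVecLin) :=
  Submodule.finrank_mono <| by
    rw [LinearMap.range_le_ker_iff, ← mulVecLin_mul, hAB, mulVecLin_zero]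

end Matrix

open Matrix

open Classical in
/-- **Null-space dimension claim in the proof of the sufficient condition.**
If `X₁` and `X₂` solve `S * X = Y` with `rank Y = L`, then the columns of the
stacked matrix `[X₁^{r₁}; -X₂^{r₂}]` (formed from the nonzero rows of `X₁` and
`-X₂`) lie in the null space of the concatenated matrix `[S^{r₁}, S^{r₂}]`
(formed from the columns of `S` indexed by the two row-supports), the stacked
matrix has rank at least `L`, and hence the null space of `[S^{r₁}, S^{r₂}]`
has dimension at least `L`. -/
theorem mmv_nullspace_dimension (M N L : ℕ)
    (S : Matrix (Fin M) (Fin N) ℂ)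
    (X₁ X₂ : Matrix (Fin N) (Fin L) ℂ)
    (Y : Matrix (Fin M) (Fin L) ℂ)
    (h₁ : S * X₁ = Y) (h₂ : S * X₂ = Y)
    (hrank : Y.rank = L)
    -- the concatenated matrix [S^{r₁}, S^{r₂}], columns indexed by the
    -- row-supports of X₁ and X₂
    (A : Matrix (Fin M) ({i : Fin N // X₁ i ≠ 0} ⊕ {i : Fin N // X₂ i ≠ 0}) ℂ)
    (hA : A = Matrix.of fun i =>
      Sum.elim (fun j : {i : Fin N // X₁ i ≠ 0} => S i j.1)
               (fun j : {i : Fin N // X₂ i ≠ 0} => S i j.1))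
    -- the stacked matrix [X₁^{r₁}; -X₂^{r₂}], rows being the nonzero rows of
    -- X₁ and of -X₂
    (B : Matrix ({i : Fin N // X₁ i ≠ 0} ⊕ {i : Fin N // X₂ i ≠ 0}) (Fin L) ℂ)
    (hB : B = Matrix.of
      (Sum.elim (fun j : {i : Fin N // X₁ i ≠ 0} => X₁ j.1)
                (fun j : {i : Fin N // X₂ i ≠ 0} => -X₂ j.1))) :
    (∀ l : Fin L, (fun p => B p l) ∈ LinearMap.ker A.mulVecLin) ∧
      L ≤ B.rank ∧
      L ≤ Module.finrank ℂ (LinearMap.ker A.mulVecLin) := by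
  have hB : B = fromRows (X₁.submatrix Subtype.val id) (-X₂.submatrix Subtype.val id) := hB
  have hAB : A * B = 0 := by
    rw [show A = fromCols (S.submatrix id Subtype.val) (S.submatrix id Subtype.val) from hA, hB,
      fromCols_mul_fromRows, Matrix.mul_neg, submatrix_mul_submatrix_nonzeroRows,
      submatrix_mul_submatrix_nonzeroRows, h₁, h₂, add_neg_cancel]
  have hrankB : L ≤ B.rank :=
    calc L = (S * X₁).rank := by rw [h₁, hrank]
      _ ≤ (X₁.submatrix Subtype.val id).rank := by
        rw [← submatrix_mul_submatrix_nonzeroRows]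
        exact rank_mul_le_right _ _
      _ = (B.submatrix Sum.inl id).rank := by rw [hB]; rfl
      _ ≤ B.rank := rank_submatrix_le _ _ _
  exact ⟨col_mem_ker_mulVecLin_of_mul_eq_zero hAB, hrankB,
    hrankB.trans (rank_le_finrank_ker_mulVecLin_of_mul_eq_zero hAB)⟩
end
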